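/- Let α ∈ (0,1). The function ℰ is twice continuously differentiable on (0,∞)², it satisfies the space-fractional diffusion equation ∂ℰ/∂t − ∂/∂x (D^α_x ℰ) = 0 at every (x,t) ∈ (0,∞)², and it is self-similar: for every λ > 0 and every (x,t) ∈ (0,∞)², ℰ(x,t) = λ^{1/(1+α)} ℰ(λ^{1/(1+α)} x, λ t). -/

import Mathlib

open MeasureTheory Real Set

/-- Caputo fractional derivative of order `α` on the half-line:
`D^α u(x) = (1/Γ(1−α)) ∫₀ˣ u'(s)(x−s)^{−α} ds`. -/
noncomputable def caputo (α : ℝ) (u : ℝ → ℝ) (x : ℝ) : ℝ :=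
  (1 / Real.Gamma (1 - α)) * ∫ s in (0:ℝ)..x, deriv u s * (x - s) ^ (-α)
/-- The function `Φ(x) = Σ (−1)ⁿ bₙ (x^{1+α}/(1+α))ⁿ`, where
`bₙ = ∏_{i<n} Γ(αi+i+2)/Γ(α(i+1)+i+2)`; it equals the generalized Mittag-Leffler
function `E_{α,1+1/α,1/α}(−x^{1+α}/(1+α))`. -/
noncomputable def PhiF (α : ℝ) (x : ℝ) : ℝ :=
  ∑' n : ℕ, (-1:ℝ)^n *
    (∏ i ∈ Finset.range n, Real.Gamma (α * i + i + 2) / Real.Gamma (α * (i+1) + i + 2)) *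
    (x ^ (1+α) / (1+α)) ^ n
/-- The normalizing constant `a₀ = (2∫₀^∞ Φ)⁻¹`. -/
noncomputable def a0 (α : ℝ) : ℝ := (2 * ∫ x in Set.Ioi (0:ℝ), PhiF α x)⁻¹

/-- The fundamental solution `ℰ(x,t) = a₀ t^{−1/(1+α)} Φ(|x| t^{−1/(1+α)})` for `t > 0`,
extended by `0` for `t ≤ 0`. -/
noncomputable def fundSol (α : ℝ) (x t : ℝ) : ℝ :=
  if 0 < t then a0 α * t ^ (-(1/(1+α))) * PhiF α (|x| * t ^ (-(1/(1+α)))) else 0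

/-!
With `z = x ^ (1 + α) / t` one has `ℰ(x, t) = a₀ t^{-1/(1+α)} g(z)` for the power series
`g(z) = ∑ (-1)ⁿ bₙ zⁿ / (1 + α)ⁿ`, which is entire because `bₙ₊₁ / bₙ = Γ(y) / Γ(y + α) → 0`
for `y = (1 + α) n + 2` (Gautschi's inequality). Expanding `∂ₓℰ` in this series and
integrating term by term against `(x - s)^{-α}` with the Beta integral, the recursion for `bₙ`
gives the closed form `D^α_x ℰ = -a₀ t^{-1/(1+α)} x g(z) / ((1 + α) t)`. Its `x`-derivative and
`∂ₜℰ` are then both `-a₀ t^{-1/(1+α)-1} (g(z) / (1 + α) + z g'(z))`. Self-similarity is a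
direct computation.
-/

open FormalMultilinearSeries Filter Topology

section PowerSeries

variable {c : ℕ → ℝ}

lemma summable_abs_mul_pow_of_radius_eq_top (hc : (ofScalars ℝ c).radius = ⊤) {R : ℝ}
    (hR : 0 ≤ R) : Summable fun n => |c n| * R ^ n := by
  have h := (ofScalars ℝ c).summable_norm_mul_pow (r := R.toNNReal) (by simp [hc])
  simpa [Real.coe_toNNReal _ hR] using h

lemma summable_mul_pow_of_radius_eq_top (hc : (ofScalars ℝ c).radius = ⊤) (z : ℝ) :
    Summable fun n => c n * z ^ n :=
  .of_norm <| by
    simpa [abs_mul, abs_pow] using summable_abs_mul_pow_of_radius_eq_top hc (abs_nonneg z)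

lemma summable_natCast_mul_abs_mul_pow_pred (hc : (ofScalars ℝ c).radius = ⊤) {R : ℝ}
    (hR : 0 < R) : Summable fun n : ℕ => n * |c n| * R ^ (n - 1) := by
  refine .of_nonneg_of_le (fun n => by positivity) (fun n => ?_)
    ((summable_abs_mul_pow_of_radius_eq_top hc (by positivity : 0 ≤ 2 * R)).mul_left R⁻¹)
  rcases Nat.eq_zero_or_pos n with rfl | hn
  · simp only [CharP.cast_eq_zero, zero_mul, pow_zero]; positivity
  have hpow : R ^ (n - 1) = R⁻¹ * R ^ n := by
    rw [← pow_sub_one_mul hn.ne', mul_comm, mul_assoc, mul_inv_cancel₀ hR.ne', mul_one]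
  have hn2 : (n : ℝ) ≤ 2 ^ n := by exact_mod_cast Nat.lt_two_pow_self.le
  calc (n : ℝ) * |c n| * R ^ (n - 1) = R⁻¹ * (|c n| * (n * R ^ n)) := by rw [hpow]; ring
    _ ≤ R⁻¹ * (|c n| * (2 ^ n * R ^ n)) := by gcongr
    _ = R⁻¹ * (|c n| * (2 * R) ^ n) := by rw [mul_pow]

noncomputable def derivCoeff (c : ℕ → ℝ) (n : ℕ) : ℝ := (n + 1) * c (n + 1)

lemma radius_derivCoeff_eq_top (hc : (ofScalars ℝ c).radius = ⊤) :
    (ofScalars ℝ (derivCoeff c)).radius = ⊤ := by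
  refine radius_eq_top_of_summable_norm _ fun r => ?_
  rcases eq_or_ne r 0 with rfl | hr
  · exact (summable_nat_add_iff 1).1 (by simp)
  have h := (summable_nat_add_iff 1).2
    (summable_natCast_mul_abs_mul_pow_pred hc (NNReal.coe_pos.2 (pos_iff_ne_zero.2 hr)))
  refine h.congr fun n => ?_
  simp [derivCoeff, abs_of_nonneg (by positivity : (0 : ℝ) ≤ n + 1)]

lemma ofScalarsSum_real_eq (c : ℕ → ℝ) (z : ℝ) : ofScalarsSum c z = ∑' n, c n * z ^ n :=
  ofScalars_sum_eq c z

lemma ofScalarsSum_const_mul (r : ℝ) (c : ℕ → ℝ) (z : ℝ) :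
    ofScalarsSum (fun n => r * c n) z = r * ofScalarsSum c z := by
  simp_rw [ofScalarsSum_real_eq, ← tsum_mul_left, mul_assoc]

lemma hasDerivAt_ofScalarsSum (hc : (ofScalars ℝ c).radius = ⊤) (z : ℝ) :
    HasDerivAt (ofScalarsSum c) (ofScalarsSum (derivCoeff c) z) z := by
  set R := |z| + 1
  have hz : z ∈ Metric.ball (0 : ℝ) R := by simp [R]
  have hbound : ∀ (n : ℕ), ∀ y ∈ Metric.ball (0 : ℝ) R,
      ‖c n * (n * y ^ (n - 1))‖ ≤ n * |c n| * R ^ (n - 1) := by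
    intro n y hy
    have hy : |y| ≤ R := (mem_ball_zero_iff.1 hy).le
    rw [Real.norm_eq_abs, abs_mul, abs_mul, abs_pow, Nat.abs_cast]
    calc |c n| * (n * |y| ^ (n - 1)) ≤ |c n| * (n * R ^ (n - 1)) := by gcongr
      _ = n * |c n| * R ^ (n - 1) := by ring
  have hderiv := hasDerivAt_tsum_of_isPreconnected
    (summable_natCast_mul_abs_mul_pow_pred hc (by positivity)) Metric.isOpen_ball
    (convex_ball (0 : ℝ) R).isPreconnected (fun n y _ => (hasDerivAt_pow n y).const_mul (c n))
    hbound (Metric.mem_ball_self (by positivity)) (summable_mul_pow_of_radius_eq_top hc 0) hz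
  have hshift : ∑' n : ℕ, c n * (n * z ^ (n - 1)) = ofScalarsSum (derivCoeff c) z := by
    rw [ofScalarsSum_real_eq, tsum_eq_zero_add'
      ((summable_mul_pow_of_radius_eq_top (radius_derivCoeff_eq_top hc) z).congr fun n => ?_)]
    · simp only [CharP.cast_eq_zero, zero_mul, mul_zero, zero_add, Nat.cast_add, Nat.cast_one,
        Nat.add_sub_cancel, derivCoeff]
      exact tsum_congr fun n => by ring
    · simp only [derivCoeff, Nat.cast_add, Nat.cast_one, Nat.add_sub_cancel]
      ring
  rwa [funext (ofScalarsSum_real_eq c), ← hshift]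

lemma contDiff_ofScalarsSum (hc : (ofScalars ℝ c).radius = ⊤) {n : WithTop ℕ∞} :
    ContDiff ℝ n (ofScalarsSum (E := ℝ) c) := by
  have h := (ofScalars ℝ c).hasFPowerSeriesOnBall (by simp [hc])
  rw [hc] at h
  exact (h.analyticOnNhd.mono (by simp)).contDiff

end PowerSeries

/-- Gautschi's inequality, from the log-convexity of `Γ` between `x + a` and `x + a + 1`. -/
lemma Gamma_add_one_le_Gamma_add_mul_rpow {x a : ℝ} (hx : 0 < x) (ha0 : 0 < a) (ha1 : a < 1) :
    Gamma (x + 1) ≤ Gamma (x + a) * (x + a) ^ (1 - a) := by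
  have hxa : 0 < x + a := by linarith
  have h := Gamma_mul_add_mul_le_rpow_Gamma_mul_rpow_Gamma hxa (by linarith : 0 < x + a + 1) ha0
    (by linarith : 0 < 1 - a) (by ring)
  rw [show a * (x + a) + (1 - a) * (x + a + 1) = x + 1 by ring, Gamma_add_one hxa.ne',
    mul_rpow hxa.le (Gamma_pos_of_pos hxa).le] at h
  calc Gamma (x + 1) ≤ Gamma (x + a) ^ a * ((x + a) ^ (1 - a) * Gamma (x + a) ^ (1 - a)) := h
    _ = Gamma (x + a) ^ (a + (1 - a)) * (x + a) ^ (1 - a) := by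
      rw [rpow_add (Gamma_pos_of_pos hxa)]; ring
    _ = Gamma (x + a) * (x + a) ^ (1 - a) := by rw [add_sub_cancel, rpow_one]

lemma Gamma_div_Gamma_add_le {x a : ℝ} (hx : 1 ≤ x) (ha0 : 0 < a) (ha1 : a < 1) :
    Gamma x / Gamma (x + a) ≤ 2 * x ^ (-a) := by
  have hx0 : 0 < x := by linarith
  have hGa : 0 < Gamma (x + a) := Gamma_pos_of_pos (by linarith)
  have h2 : (x + a) ^ (1 - a) ≤ 2 * x ^ (1 - a) :=
    calc (x + a) ^ (1 - a) ≤ (2 * x) ^ (1 - a) := by gcongr; linarith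
      _ = 2 ^ (1 - a) * x ^ (1 - a) := mul_rpow zero_le_two hx0.le
      _ ≤ 2 ^ (1 : ℝ) * x ^ (1 - a) := by gcongr <;> [norm_num; linarith]
      _ = 2 * x ^ (1 - a) := by rw [rpow_one]
  have hG : x * Gamma x ≤ x * (2 * x ^ (-a) * Gamma (x + a)) :=
    calc x * Gamma x = Gamma (x + 1) := (Gamma_add_one hx0.ne').symm
      _ ≤ Gamma (x + a) * (x + a) ^ (1 - a) := Gamma_add_one_le_Gamma_add_mul_rpow hx0 ha0 ha1
      _ ≤ Gamma (x + a) * (2 * x ^ (1 - a)) := by gcongr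
      _ = x * (2 * x ^ (-a) * Gamma (x + a)) := by
        rw [sub_eq_add_neg, rpow_add hx0, rpow_one]; ring
  rw [div_le_iff₀ hGa]
  exact le_of_mul_le_mul_left hG hx0

lemma tendsto_Gamma_div_Gamma_add_atTop {a : ℝ} (ha0 : 0 < a) (ha1 : a < 1) :
    Tendsto (fun x => Gamma x / Gamma (x + a)) atTop (𝓝 0) := by
  have hlim : Tendsto (fun x : ℝ => 2 * x ^ (-a)) atTop (𝓝 0) := by
    simpa using (tendsto_rpow_neg_atTop ha0).const_mul 2
  refine tendsto_of_tendsto_of_tendsto_of_le_of_le' tendsto_const_nhds hlim ?_ ?_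
  · filter_upwards [eventually_gt_atTop 0] with x hx
    exact div_nonneg (Gamma_pos_of_pos hx).le (Gamma_pos_of_pos (by linarith)).le
  · filter_upwards [eventually_ge_atTop 1] with x hx
    exact Gamma_div_Gamma_add_le hx ha0 ha1

section Coefficients

variable {α : ℝ}

noncomputable def bCoeff (α : ℝ) (n : ℕ) : ℝ :=
  ∏ i ∈ Finset.range n, Gamma (α * i + i + 2) / Gamma (α * (i + 1) + i + 2)

noncomputable def phiCoeff (α : ℝ) (n : ℕ) : ℝ := (-1) ^ n * bCoeff α n / (1 + α) ^ n

lemma PhiF_eq_ofScalarsSum (α y : ℝ) : PhiF α y = ofScalarsSum (phiCoeff α) (y ^ (1 + α)) := by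
  rw [PhiF, ofScalarsSum_real_eq]
  exact tsum_congr fun n => by rw [phiCoeff, bCoeff, div_pow]; ring

lemma bCoeff_succ (α : ℝ) (n : ℕ) :
    bCoeff α (n + 1) = bCoeff α n * (Gamma ((1 + α) * n + 2) / Gamma ((1 + α) * n + 2 + α)) := by
  rw [bCoeff, Finset.prod_range_succ, ← bCoeff]
  congr 3 <;> ring

lemma bCoeff_pos (hα : -1 < α) (n : ℕ) : 0 < bCoeff α n :=
  Finset.prod_pos fun i _ => div_pos (Gamma_pos_of_pos (by nlinarith [(i.cast_nonneg : (0:ℝ) ≤ i)]))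
    (Gamma_pos_of_pos (by nlinarith [(i.cast_nonneg : (0:ℝ) ≤ i)]))

lemma abs_phiCoeff_succ_div (hα : -1 < α) (n : ℕ) :
    |phiCoeff α (n + 1)| / |phiCoeff α n|
      = Gamma ((1 + α) * n + 2) / Gamma ((1 + α) * n + 2 + α) / (1 + α) := by
  have hb := bCoeff_pos hα n
  have h1α : 0 < 1 + α := by linarith
  have hn : 0 ≤ (1 + α) * n := by positivity
  have hG : 0 < Gamma ((1 + α) * n + 2) := Gamma_pos_of_pos (by linarith)
  have hG' : 0 < Gamma ((1 + α) * n + 2 + α) := Gamma_pos_of_pos (by linarith)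
  simp only [phiCoeff, abs_div, abs_mul, abs_pow, abs_neg, abs_one, one_pow, one_mul,
    abs_of_pos hb, abs_of_pos h1α, bCoeff_succ, abs_of_pos hG, abs_of_pos hG']
  field_simp
  ring

lemma radius_phiCoeff_eq_top (hα0 : 0 < α) (hα1 : α < 1) :
    (ofScalars ℝ (phiCoeff α)).radius = ⊤ := by
  have hb : ∀ n, phiCoeff α n ≠ 0 := fun n => by
    simp [phiCoeff, (bCoeff_pos (by linarith) n).ne', (by linarith : 1 + α ≠ 0)]
  refine ofScalars_radius_eq_top_of_tendsto ℝ _ (.of_forall hb) ?_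
  simp only [Nat.succ_eq_add_one, Real.norm_eq_abs, abs_phiCoeff_succ_div (by linarith : -1 < α)]
  have hy : Tendsto (fun n : ℕ => (1 + α) * n + 2) atTop atTop :=
    tendsto_atTop_add_const_right _ _ <|
      (tendsto_natCast_atTop_atTop).const_mul_atTop (by linarith)
  simpa using ((tendsto_Gamma_div_Gamma_add_atTop hα0 hα1).comp hy).div_const (1 + α)

/-- This identity is what the recursion for `bₙ` is designed for: it turns the fractional integral
of `∂ₓℰ` back into a multiple of the series of `Φ`. -/
lemma derivCoeff_phiCoeff_mul_Gamma_div (hα : -1 < α) (n : ℕ) :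
    derivCoeff (phiCoeff α) n
        * (Gamma ((1 + α) * n + (1 + α)) / Gamma ((1 + α) * n + (1 + α) + 1 - α))
      = -((1 + α) ^ 2)⁻¹ * phiCoeff α n := by
  have h1α : 0 < 1 + α := by linarith
  have hq : 0 < (1 + α) * n + (1 + α) := by positivity
  rw [show (1 + α) * n + (1 + α) + 1 - α = (1 + α) * n + 2 by ring]
  have hG : Gamma ((1 + α) * n + 2 + α)
      = ((1 + α) * n + (1 + α)) * Gamma ((1 + α) * n + (1 + α)) := by
    rw [← Gamma_add_one hq.ne']; ring_nf
  have hG2 : 0 < Gamma ((1 + α) * n + 2) := Gamma_pos_of_pos (by positivity)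
  simp only [derivCoeff, phiCoeff, bCoeff_succ, hG]
  field_simp
  ring

end Coefficients

section FractionalIntegral

open intervalIntegral

variable {α p ξ : ℝ}

lemma integral_rpow_mul_sub_rpow_neg (hp : 0 < p) (hα : α < 1) (hξ : 0 < ξ) :
    ∫ s in (0 : ℝ)..ξ, s ^ (p - 1) * (ξ - s) ^ (-α)
      = Gamma p * Gamma (1 - α) / Gamma (p + 1 - α) * ξ ^ (p - α) := by
  have hbeta := Complex.betaIntegral_scaled p (1 - α : ℝ) hξ
  rw [Complex.betaIntegral_eq_Gamma_mul_div _ _ (by simpa using hp) (by simp; linarith)] at hbeta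
  apply Complex.ofReal_injective
  rw [← integral_ofReal]
  convert hbeta using 1
  · refine integral_congr fun s hs => ?_
    rw [uIcc_of_le hξ.le] at hs
    push_cast
    rw [Complex.ofReal_cpow hs.1, Complex.ofReal_cpow (sub_nonneg.2 hs.2)]
    push_cast
    ring_nf
  · rw [show (p : ℂ) + (1 - α : ℝ) - 1 = (p - α : ℝ) by push_cast; ring,
      show (p : ℂ) + (1 - α : ℝ) = (p + 1 - α : ℝ) by push_cast; ring,
      ← Complex.ofReal_cpow hξ.le, Complex.Gamma_ofReal, Complex.Gamma_ofReal, Complex.Gamma_ofReal]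
    push_cast
    ring

lemma integrableOn_rpow_mul_sub_rpow_neg (hp : 1 ≤ p) (hα : α < 1) (hξ : 0 ≤ ξ) :
    IntegrableOn (fun s => s ^ (p - 1) * (ξ - s) ^ (-α)) (Ioc 0 ξ) := by
  rw [← intervalIntegrable_iff_integrableOn_Ioc_of_le hξ]
  have hrpow : IntervalIntegrable (fun s => s ^ (-α)) volume 0 ξ :=
    intervalIntegrable_rpow' (by linarith)
  have hsing : IntervalIntegrable (fun s => (ξ - s) ^ (-α)) volume 0 ξ := by
    simpa using (hrpow.comp_sub_left ξ).symm
  exact hsing.continuousOn_mul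
    (continuous_id.rpow_const fun _ => Or.inr (by linarith)).continuousOn

end FractionalIntegral

section TermwiseIntegral

open intervalIntegral

lemma mul_rpow_pow_mul_rpow {s : ℝ} (hs : 0 < s) (lam κ q : ℝ) (n : ℕ) :
    (lam * s ^ κ) ^ n * s ^ q = lam ^ n * s ^ (κ * n + q) := by
  rw [mul_pow, ← rpow_natCast (s ^ κ), ← rpow_mul hs.le, rpow_add hs]
  ring

variable {d : ℕ → ℝ} {κ p α ξ : ℝ}

lemma summable_integral_norm_mul_rpow (hd : (ofScalars ℝ d).radius = ⊤) (lam : ℝ) (hκ : 0 ≤ κ)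
    (hp : 1 ≤ p) (hα : α < 1) (hξ : 0 < ξ) :
    Summable fun n : ℕ =>
      ∫ s in Ioc 0 ξ, ‖d n * lam ^ n * (s ^ (κ * n + p - 1) * (ξ - s) ^ (-α))‖ := by
  refine .of_nonneg_of_le (fun n => integral_nonneg fun s => norm_nonneg _) (fun n => ?_)
    ((summable_abs_mul_pow_of_radius_eq_top hd (R := |lam| * ξ ^ κ) (by positivity)).mul_right
      (∫ s in Ioc 0 ξ, s ^ (p - 1) * (ξ - s) ^ (-α)))
  rw [← MeasureTheory.integral_const_mul]
  refine setIntegral_mono_on ?_ ((integrableOn_rpow_mul_sub_rpow_neg hp hα hξ.le).const_mul _)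
    measurableSet_Ioc fun s hs => ?_
  · exact ((integrableOn_rpow_mul_sub_rpow_neg (by nlinarith [n.cast_nonneg (α := ℝ)]) hα
      hξ.le).const_mul _).norm
  have hs0 := hs.1
  have hξs : 0 ≤ ξ - s := sub_nonneg.2 hs.2
  calc ‖d n * lam ^ n * (s ^ (κ * n + p - 1) * (ξ - s) ^ (-α))‖
      = |d n| * ((|lam| * s ^ κ) ^ n * s ^ (p - 1)) * (ξ - s) ^ (-α) := by
        rw [mul_rpow_pow_mul_rpow hs0, Real.norm_eq_abs, abs_mul, abs_mul, abs_mul, abs_pow,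
          abs_of_nonneg (rpow_nonneg hs0.le _), abs_of_nonneg (rpow_nonneg hξs _),
          show κ * n + p - 1 = κ * n + (p - 1) by ring]
        ring
    _ ≤ |d n| * ((|lam| * ξ ^ κ) ^ n * s ^ (p - 1)) * (ξ - s) ^ (-α) := by
        gcongr
        exact hs.2
    _ = |d n| * (|lam| * ξ ^ κ) ^ n * (s ^ (p - 1) * (ξ - s) ^ (-α)) := by ring

lemma integral_ofScalarsSum_mul_rpow (hd : (ofScalars ℝ d).radius = ⊤) (lam : ℝ) (hκ : 0 ≤ κ)
    (hp : 1 ≤ p) (hα : α < 1) (hξ : 0 < ξ) :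
    ∫ s in (0 : ℝ)..ξ, ofScalarsSum d (lam * s ^ κ) * (s ^ (p - 1) * (ξ - s) ^ (-α))
      = Gamma (1 - α) * ξ ^ (p - α) * ofScalarsSum
          (fun n => d n * (Gamma (κ * n + p) / Gamma (κ * n + p + 1 - α))) (lam * ξ ^ κ) := by
  set f : ℕ → ℝ → ℝ := fun n s => d n * lam ^ n * (s ^ (κ * n + p - 1) * (ξ - s) ^ (-α))
  have hpn : ∀ n : ℕ, 1 ≤ κ * n + p := fun n => by nlinarith [n.cast_nonneg (α := ℝ)]
  have hexpand : ∀ s ∈ Ioc 0 ξ,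
      ofScalarsSum d (lam * s ^ κ) * (s ^ (p - 1) * (ξ - s) ^ (-α)) = ∑' n, f n s := by
    intro s hs
    rw [ofScalarsSum_real_eq, ← tsum_mul_right]
    refine tsum_congr fun n => ?_
    simp only [f]
    rw [show κ * n + p - 1 = κ * n + (p - 1) by ring]
    linear_combination d n * (ξ - s) ^ (-α) * mul_rpow_pow_mul_rpow hs.1 lam κ (p - 1) n
  have hint : ∀ n, IntegrableOn (f n) (Ioc 0 ξ) := fun n =>
    (integrableOn_rpow_mul_sub_rpow_neg (hpn n) hα hξ.le).const_mul _
  have hval : ∀ n, ∫ s in Ioc 0 ξ, f n s = Gamma (1 - α) * ξ ^ (p - α) * (d n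
      * (Gamma (κ * n + p) / Gamma (κ * n + p + 1 - α)) * (lam * ξ ^ κ) ^ n) := by
    intro n
    rw [MeasureTheory.integral_const_mul, ← integral_of_le hξ.le,
      integral_rpow_mul_sub_rpow_neg (by linarith [hpn n]) hα hξ]
    rw [show κ * n + p - α = κ * n + (p - α) by ring]
    linear_combination -(d n * (Gamma (κ * n + p) * Gamma (1 - α) / Gamma (κ * n + p + 1 - α)))
      * mul_rpow_pow_mul_rpow hξ lam κ (p - α) n
  have hsummable : Summable fun n => ∫ s in Ioc 0 ξ, ‖f n s‖ :=
    summable_integral_norm_mul_rpow hd lam hκ hp hα hξ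
  rw [integral_of_le hξ.le, setIntegral_congr_fun measurableSet_Ioc hexpand,
    ← integral_tsum_of_summable_integral_norm hint hsummable, tsum_congr hval, tsum_mul_left,
    ofScalarsSum_real_eq]

end TermwiseIntegral

section FundamentalSolution

variable {α x t : ℝ}

lemma fundSol_eq_ofScalarsSum (hα : 1 + α ≠ 0) (hx : 0 ≤ x) (ht : 0 < t) :
    fundSol α x t = a0 α * t ^ (-(1 / (1 + α))) * ofScalarsSum (phiCoeff α) (x ^ (1 + α) / t) := by
  rw [fundSol, if_pos ht, PhiF_eq_ofScalarsSum, abs_of_nonneg hx,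
    mul_rpow hx (rpow_nonneg ht.le _), ← rpow_mul ht.le,
    show -(1 / (1 + α)) * (1 + α) = -1 by field_simp, rpow_neg_one, ← div_eq_mul_inv]

lemma fundSol_eq_rpow_mul_fundSol {lam : ℝ} (hlam : 0 < lam) (α x t : ℝ) :
    fundSol α x t = lam ^ (1 / (1 + α)) * fundSol α (lam ^ (1 / (1 + α)) * x) (lam * t) := by
  by_cases ht : 0 < t
  · have hcancel : lam ^ (1 / (1 + α)) * lam ^ (-(1 / (1 + α))) = 1 := by
      rw [← rpow_add hlam, add_neg_cancel, rpow_zero]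
    rw [fundSol, fundSol, if_pos ht, if_pos (mul_pos hlam ht), abs_mul,
      abs_of_pos (rpow_pos_of_pos hlam _), mul_rpow hlam.le ht.le]
    rw [show lam ^ (1 / (1 + α)) * |x| * (lam ^ (-(1 / (1 + α))) * t ^ (-(1 / (1 + α))))
        = |x| * t ^ (-(1 / (1 + α))) by linear_combination |x| * t ^ (-(1 / (1 + α))) * hcancel]
    linear_combination -(a0 α * t ^ (-(1 / (1 + α))) * PhiF α (|x| * t ^ (-(1 / (1 + α)))))
      * hcancel
  · rw [fundSol, fundSol, if_neg ht, if_neg (by nlinarith), mul_zero]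

lemma contDiffOn_fundSol (hα0 : 0 < α) (hα1 : α < 1) {n : WithTop ℕ∞} :
    ContDiffOn ℝ n (fun p : ℝ × ℝ => fundSol α p.1 p.2) (Ioi 0 ×ˢ Ioi 0) := by
  refine ContDiffOn.congr (f := fun p : ℝ × ℝ =>
    a0 α * p.2 ^ (-(1 / (1 + α))) * ofScalarsSum (phiCoeff α) (p.1 ^ (1 + α) / p.2))
    (fun p hp => ContDiffAt.contDiffWithinAt ?_)
    (fun p hp => fundSol_eq_ofScalarsSum (by linarith) (le_of_lt hp.1) hp.2)
  have hp1 : p.1 ≠ 0 := (mem_Ioi.1 hp.1).ne'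
  have hp2 : p.2 ≠ 0 := (mem_Ioi.1 hp.2).ne'
  have hz : ContDiffAt ℝ n (fun p : ℝ × ℝ => p.1 ^ (1 + α) / p.2) p :=
    ((contDiffAt_rpow_const_of_ne hp1).comp p contDiffAt_fst).div contDiffAt_snd hp2
  exact (contDiffAt_const.mul ((contDiffAt_rpow_const_of_ne hp2).comp p contDiffAt_snd)).mul
    ((contDiff_ofScalarsSum (radius_phiCoeff_eq_top hα0 hα1)).contDiffAt.comp p hz)

lemma hasDerivAt_ofScalarsSum_phiCoeff_rpow_div (hα0 : 0 < α) (hα1 : α < 1) (hx : 0 < x)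
    (t : ℝ) :
    HasDerivAt (fun y => ofScalarsSum (phiCoeff α) (y ^ (1 + α) / t))
      (ofScalarsSum (derivCoeff (phiCoeff α)) (x ^ (1 + α) / t) * ((1 + α) * x ^ α / t)) x := by
  have hz : HasDerivAt (fun y => y ^ (1 + α) / t) ((1 + α) * x ^ α / t) x := by
    simpa using (hasDerivAt_rpow_const (p := 1 + α) (Or.inl hx.ne')).div_const t
  exact (hasDerivAt_ofScalarsSum (radius_phiCoeff_eq_top hα0 hα1) _).comp x hz

lemma hasDerivAt_fundSol_space (hα0 : 0 < α) (hα1 : α < 1) (hx : 0 < x) (ht : 0 < t) :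
    HasDerivAt (fun y => fundSol α y t) (a0 α * t ^ (-(1 / (1 + α))) * ((1 + α) / t)
      * (ofScalarsSum (derivCoeff (phiCoeff α)) (x ^ (1 + α) / t) * x ^ α)) x := by
  have h := (hasDerivAt_ofScalarsSum_phiCoeff_rpow_div hα0 hα1 hx t).const_mul
    (a0 α * t ^ (-(1 / (1 + α))))
  refine (h.congr_of_eventuallyEq ?_).congr_deriv (by ring)
  filter_upwards [Ioi_mem_nhds hx] with y hy
  exact fundSol_eq_ofScalarsSum (by linarith) (le_of_lt hy) ht

lemma hasDerivAt_fundSol_time (hα0 : 0 < α) (hα1 : α < 1) (hx : 0 < x) (ht : 0 < t) :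
    HasDerivAt (fun τ => fundSol α x τ) (-(a0 α * t ^ (-(1 / (1 + α))) / t)
      * (1 / (1 + α) * ofScalarsSum (phiCoeff α) (x ^ (1 + α) / t)
        + x ^ (1 + α) / t * ofScalarsSum (derivCoeff (phiCoeff α)) (x ^ (1 + α) / t))) t := by
  have hpow : HasDerivAt (fun τ => τ ^ (-(1 / (1 + α))))
      (-(1 / (1 + α)) * t ^ (-(1 / (1 + α)) - 1)) t := hasDerivAt_rpow_const (Or.inl ht.ne')
  have hz : HasDerivAt (fun τ => x ^ (1 + α) / τ) (-(x ^ (1 + α)) / t ^ 2) t := by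
    simpa [div_eq_mul_inv] using (hasDerivAt_inv ht.ne').const_mul (x ^ (1 + α))
  have h := ((hpow.mul ((hasDerivAt_ofScalarsSum (radius_phiCoeff_eq_top hα0 hα1) _).comp t
    hz)).const_mul (a0 α))
  refine (h.congr_of_eventuallyEq ?_).congr_deriv ?_
  · filter_upwards [Ioi_mem_nhds ht] with τ hτ
    rw [fundSol_eq_ofScalarsSum (by linarith) hx.le hτ, mul_assoc]
    rfl
  · rw [Function.comp_apply, rpow_sub ht, rpow_one]
    field_simp
    ring

lemma caputo_fundSol (hα0 : 0 < α) (hα1 : α < 1) (hx : 0 < x) (ht : 0 < t) :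
    caputo α (fun y => fundSol α y t) x
      = -(a0 α * t ^ (-(1 / (1 + α))) / ((1 + α) * t))
        * (x * ofScalarsSum (phiCoeff α) (x ^ (1 + α) / t)) := by
  have h1α : 0 < 1 + α := by linarith
  have hderiv : ∀ s ∈ uIoc 0 x, deriv (fun y => fundSol α y t) s * (x - s) ^ (-α)
      = a0 α * t ^ (-(1 / (1 + α))) * ((1 + α) / t) * (ofScalarsSum (derivCoeff (phiCoeff α))
        (t⁻¹ * s ^ (1 + α)) * (s ^ (1 + α - 1) * (x - s) ^ (-α))) := by
    intro s hs
    rw [uIoc_of_le hx.le] at hs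
    rw [(hasDerivAt_fundSol_space hα0 hα1 hs.1 ht).deriv, add_sub_cancel_left, ← div_eq_inv_mul]
    ring
  have hcoeff : (fun n : ℕ => derivCoeff (phiCoeff α) n * (Gamma ((1 + α) * n + (1 + α))
      / Gamma ((1 + α) * n + (1 + α) + 1 - α))) = fun n => -((1 + α) ^ 2)⁻¹ * phiCoeff α n :=
    funext (derivCoeff_phiCoeff_mul_Gamma_div (by linarith))
  rw [caputo, intervalIntegral.integral_congr_ae (.of_forall hderiv),
    intervalIntegral.integral_const_mul,
    integral_ofScalarsSum_mul_rpow (radius_derivCoeff_eq_top (radius_phiCoeff_eq_top hα0 hα1)) _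
      h1α.le (by linarith) hα1 hx, hcoeff, ofScalarsSum_const_mul, add_sub_cancel_right, rpow_one,
    ← div_eq_inv_mul]
  have hΓ : Gamma (1 - α) ≠ 0 := (Gamma_pos_of_pos (by linarith)).ne'
  field_simp

lemma hasDerivAt_caputo_fundSol (hα0 : 0 < α) (hα1 : α < 1) (hx : 0 < x) (ht : 0 < t) :
    HasDerivAt (fun ξ => caputo α (fun y => fundSol α y t) ξ) (-(a0 α * t ^ (-(1 / (1 + α))) / t)
      * (1 / (1 + α) * ofScalarsSum (phiCoeff α) (x ^ (1 + α) / t)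
        + x ^ (1 + α) / t * ofScalarsSum (derivCoeff (phiCoeff α)) (x ^ (1 + α) / t))) x := by
  have h := ((hasDerivAt_id' x).mul
    (hasDerivAt_ofScalarsSum_phiCoeff_rpow_div hα0 hα1 hx t)).const_mul
      (-(a0 α * t ^ (-(1 / (1 + α))) / ((1 + α) * t)))
  refine (h.congr_of_eventuallyEq ?_).congr_deriv ?_
  · filter_upwards [Ioi_mem_nhds hx] with ξ hξ
    exact caputo_fundSol hα0 hα1 hξ ht
  · rw [rpow_add hx, rpow_one]
    field_simp

end FundamentalSolution

/-- `ℰ` is `C²` on `(0,∞)²`, solves `ℰ_t − ∂_x D^α_x ℰ = 0` there,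
and is self-similar: `ℰ(x,t) = λ^{1/(1+α)} ℰ(λ^{1/(1+α)} x, λ t)`. -/
theorem fundSol_properties (α : ℝ) (hα : α ∈ Set.Ioo (0:ℝ) 1) :
    ContDiffOn ℝ 2 (fun p : ℝ × ℝ => fundSol α p.1 p.2) (Set.Ioi 0 ×ˢ Set.Ioi 0) ∧
    (∀ x > (0:ℝ), ∀ t > (0:ℝ),
        deriv (fun τ => fundSol α x τ) t
          - deriv (fun ξ => caputo α (fun y => fundSol α y t) ξ) x = 0) ∧
    (∀ lam > (0:ℝ), ∀ x > (0:ℝ), ∀ t > (0:ℝ),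
        fundSol α x t
          = lam ^ ((1:ℝ)/(1+α)) * fundSol α (lam ^ ((1:ℝ)/(1+α)) * x) (lam * t)) := by
  obtain ⟨hα0, hα1⟩ := hα
  refine ⟨contDiffOn_fundSol hα0 hα1, fun x hx t ht => ?_,
    fun lam hlam x _ t _ => fundSol_eq_rpow_mul_fundSol hlam α x t⟩
  rw [(hasDerivAt_fundSol_time hα0 hα1 hx ht).deriv,
    (hasDerivAt_caputo_fundSol hα0 hα1 hx ht).deriv, sub_self]
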